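/- arXiv:2603.11972 — 2 statements merged into one kernel-verified Lean document; each statement's English description precedes it below -/
import Mathlib

section
/- Let X be a Hausdorff locally convex space, σ a continuous Tauber–Wiener function, K ⊆ X compact, m ≥ 1, g ∈ C(K, ℝ^m), and ε > 0. Then there exists a map H : X → ℝ^m, each of whose m components is a finite sum of terms c·σ(f(x) − θ) with f ∈ X*, c, θ ∈ ℝ, such that sup_{x∈K} ‖g(x) − H(x)‖_∞ < ε, where ‖·‖_∞ is the max norm on ℝ^m. -/
/-!
On a compact `K`, the functions `x ↦ exp (f x)` with `f ∈ X*` are closed under products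
(`exp (f x) * exp (g x) = exp ((f + g) x)`) and separate points by Hahn–Banach, so by
Stone–Weierstrass their span is uniformly dense in `C(K, ℝ)`. Each `exp ∘ f` is in turn a uniform
limit on `K` of networks: `f '' K` lies in a compact interval on which the Tauber–Wiener property
approximates `exp` by sums `∑ cᵢ σ (wᵢ t - θᵢ)`, and `σ (w * f x - θ) = σ ((w • f) x - θ)`.
Uniform approximability on `K` is transitive, which chains the two approximations; the
vector-valued case is componentwise.
-/

/-- `σ` is a Tauber–Wiener function. -/
def TauberWiener (σ : ℝ → ℝ) : Prop :=
  ∀ (a b : ℝ) (g : ℝ → ℝ), ContinuousOn g (Set.Icc a b) →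
    ∀ ε > 0, ∃ (N : ℕ) (c w θ : Fin N → ℝ),
      ∀ t ∈ Set.Icc a b, |g t - ∑ i, c i * σ (w i * t - θ i)| < ε

open Set Real Submodule

namespace Submodule

variable {X : Type*}

def uniformClosureOn (P : Submodule ℝ (X → ℝ)) (K : Set X) : Submodule ℝ (X → ℝ) where
  carrier := {h | ∀ ε > 0, ∃ φ ∈ P, ∀ x ∈ K, |h x - φ x| < ε}
  zero_mem' ε hε := ⟨0, P.zero_mem, fun x _ => by simpa using hε⟩
  add_mem' {h₁ h₂} hh₁ hh₂ ε hε := by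
    obtain ⟨φ₁, hφ₁, hK₁⟩ := hh₁ (ε / 2) (half_pos hε)
    obtain ⟨φ₂, hφ₂, hK₂⟩ := hh₂ (ε / 2) (half_pos hε)
    refine ⟨φ₁ + φ₂, P.add_mem hφ₁ hφ₂, fun x hx => ?_⟩
    calc |(h₁ + h₂) x - (φ₁ + φ₂) x| = |(h₁ x - φ₁ x) + (h₂ x - φ₂ x)| := by
          simp only [Pi.add_apply, add_sub_add_comm]
      _ ≤ |h₁ x - φ₁ x| + |h₂ x - φ₂ x| := abs_add_le _ _
      _ < ε / 2 + ε / 2 := add_lt_add (hK₁ x hx) (hK₂ x hx)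
      _ = ε := add_halves ε
  smul_mem' c h hh ε hε := by
    obtain ⟨φ, hφ, hK⟩ := hh (ε / (|c| + 1)) (by positivity)
    refine ⟨c • φ, P.smul_mem c hφ, fun x hx => ?_⟩
    calc |(c • h) x - (c • φ) x| = |c| * |h x - φ x| := by
          simp only [Pi.smul_apply, smul_eq_mul, ← mul_sub, abs_mul]
      _ ≤ (|c| + 1) * |h x - φ x| := by gcongr; linarith
      _ < (|c| + 1) * (ε / (|c| + 1)) := by gcongr; exact hK x hx
      _ = ε := mul_div_cancel₀ ε (by positivity)

variable {P Q : Submodule ℝ (X → ℝ)} {K : Set X}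

theorem le_uniformClosureOn : P ≤ P.uniformClosureOn K :=
  fun h hh ε hε => ⟨h, hh, fun x _ => by simpa using hε⟩

theorem uniformClosureOn_mono (hPQ : P ≤ Q) : P.uniformClosureOn K ≤ Q.uniformClosureOn K :=
  fun _ hh ε hε => (hh ε hε).imp fun _ hφ => ⟨hPQ hφ.1, hφ.2⟩

theorem uniformClosureOn_uniformClosureOn :
    (P.uniformClosureOn K).uniformClosureOn K = P.uniformClosureOn K := by
  refine le_antisymm (fun h hh ε hε => ?_) le_uniformClosureOn
  obtain ⟨ψ, hψ, hhψ⟩ := hh (ε / 2) (half_pos hε)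
  obtain ⟨φ, hφ, hψφ⟩ := hψ (ε / 2) (half_pos hε)
  refine ⟨φ, hφ, fun x hx => ?_⟩
  calc |h x - φ x| ≤ |h x - ψ x| + |ψ x - φ x| := abs_sub_le _ _ _
    _ < ε / 2 + ε / 2 := add_lt_add (hhψ x hx) (hψφ x hx)
    _ = ε := add_halves ε

end Submodule

section Networks

variable {X : Type*} [AddCommGroup X] [Module ℝ X] [TopologicalSpace X]

variable (X) in
def neuralNetworks (σ : ℝ → ℝ) : Submodule ℝ (X → ℝ) :=
  span ℝ (range fun p : (X →L[ℝ] ℝ) × ℝ => fun x => σ (p.1 x - p.2))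

variable {σ : ℝ → ℝ}

theorem ridge_mem_neuralNetworks (f : X →L[ℝ] ℝ) (θ : ℝ) :
    (fun x => σ (f x - θ)) ∈ neuralNetworks X σ :=
  subset_span ⟨(f, θ), rfl⟩

theorem exists_sum_of_mem_neuralNetworks {h : X → ℝ} (hh : h ∈ neuralNetworks X σ) :
    ∃ (N : ℕ) (f : Fin N → X →L[ℝ] ℝ) (c θ : Fin N → ℝ),
      ∀ x, h x = ∑ i, c i * σ (f i x - θ i) := by
  obtain ⟨N, c, u, rfl⟩ := mem_span_set'.mp hh
  choose p hp using fun i => (u i).2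
  refine ⟨N, fun i => (p i).1, c, fun i => (p i).2, fun x => ?_⟩
  simp only [Finset.sum_apply, Pi.smul_apply, smul_eq_mul, ← hp]

theorem TauberWiener.comp_mem_uniformClosureOn (hσ : TauberWiener σ) {K : Set X}
    (hK : IsCompact K) {u : ℝ → ℝ} (hu : Continuous u) (f : X →L[ℝ] ℝ) :
    u ∘ f ∈ (neuralNetworks X σ).uniformClosureOn K := by
  intro ε hε
  obtain ⟨R, hR⟩ := (hK.image f.continuous).isBounded.subset_closedBall 0
  obtain ⟨N, c, w, θ, hN⟩ := hσ (-R) R u hu.continuousOn ε hε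
  refine ⟨∑ i, c i • fun x => σ ((w i • f) x - θ i),
    sum_mem fun i _ => smul_mem _ _ (ridge_mem_neuralNetworks _ _), fun x hx => ?_⟩
  have hfx : f x ∈ Icc (-R) R := by
    simpa [Real.closedBall_eq_Icc] using hR (mem_image_of_mem f hx)
  simpa [Finset.sum_apply] using hN (f x) hfx

end Networks

section StoneWeierstrass

variable {X : Type*} [AddCommGroup X] [Module ℝ X] [TopologicalSpace X]

def expDualOn (K : Set X) : Submonoid C(K, ℝ) where
  carrier := range fun f : X →L[ℝ] ℝ => ⟨fun x => exp (f x), by fun_prop⟩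
  mul_mem' := by
    rintro _ _ ⟨f, rfl⟩ ⟨f', rfl⟩
    exact ⟨f + f', by ext; simp [exp_add]⟩
  one_mem' := ⟨0, by ext; simp⟩

theorem separatesPoints_adjoin_expDualOn [SeparatingDual ℝ X] (K : Set X) :
    (Algebra.adjoin ℝ (expDualOn K : Set C(K, ℝ))).SeparatesPoints := by
  intro x y hxy
  obtain ⟨f, hf⟩ := SeparatingDual.exists_separating_of_ne (R := ℝ) (Subtype.val_injective.ne hxy)
  refine ⟨_, ⟨_, Algebra.subset_adjoin ⟨f, rfl⟩, rfl⟩, ?_⟩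
  simpa using hf

theorem continuousOn_mem_uniformClosureOn_span_exp [SeparatingDual ℝ X] {K : Set X}
    (hK : IsCompact K) {h : X → ℝ} (hh : ContinuousOn h K) :
    h ∈ (span ℝ (range fun f : X →L[ℝ] ℝ => exp ∘ f)).uniformClosureOn K := by
  intro ε hε
  have := isCompact_iff_compactSpace.mp hK
  obtain ⟨⟨p, hpA⟩, hp⟩ := ContinuousMap.exists_mem_subalgebra_near_continuous_of_separatesPoints
    _ (separatesPoints_adjoin_expDualOn K) _ hh.domRestrict ε hε
  have hp_span : p ∈ span ℝ (expDualOn K : Set C(K, ℝ)) := by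
    rwa [← Submonoid.closure_eq (expDualOn K), ← Algebra.adjoin_eq_span]
  have hspan_le : span ℝ (expDualOn K : Set C(K, ℝ)) ≤
      ((span ℝ (range fun f : X →L[ℝ] ℝ => exp ∘ f)).map
        (LinearMap.funLeft ℝ ℝ ((↑) : K → X))).comap (ContinuousMap.coeFnLinearMap ℝ) :=
    span_le.2 <| by rintro _ ⟨f, rfl⟩; exact ⟨exp ∘ f, subset_span ⟨f, rfl⟩, rfl⟩
  obtain ⟨φ, hφ, hφp⟩ := hspan_le hp_span
  refine ⟨φ, hφ, fun x hx => ?_⟩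
  have hφx : φ x = p ⟨x, hx⟩ := congrFun hφp ⟨x, hx⟩
  simpa [hφx, abs_sub_comm] using hp ⟨x, hx⟩

end StoneWeierstrass

theorem TauberWiener.continuousOn_mem_uniformClosureOn_neuralNetworks
    {X : Type*} [AddCommGroup X] [Module ℝ X] [TopologicalSpace X] [SeparatingDual ℝ X]
    {σ : ℝ → ℝ} (hσ : TauberWiener σ) {K : Set X} (hK : IsCompact K) {h : X → ℝ}
    (hh : ContinuousOn h K) : h ∈ (neuralNetworks X σ).uniformClosureOn K := by
  have hexp : span ℝ (range fun f : X →L[ℝ] ℝ => exp ∘ f) ≤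
      (neuralNetworks X σ).uniformClosureOn K :=
    span_le.2 <| range_subset_iff.2 <| hσ.comp_mem_uniformClosureOn hK continuous_exp
  rw [← uniformClosureOn_uniformClosureOn]
  exact uniformClosureOn_mono hexp (continuousOn_mem_uniformClosureOn_span_exp hK hh)

theorem topological_network_dense_vector_general
    {X : Type*} [AddCommGroup X] [Module ℝ X] [TopologicalSpace X]
    [IsTopologicalAddGroup X] [ContinuousSMul ℝ X] [LocallyConvexSpace ℝ X] [T2Space X]
    (σ : ℝ → ℝ) (hσ : TauberWiener σ)
    (K : Set X) (hK : IsCompact K) (m : ℕ)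
    (g : X → Fin m → ℝ) (hg : ContinuousOn g K) (ε : ℝ) (hε : 0 < ε) :
    ∃ H : X → Fin m → ℝ,
      (∀ r : Fin m, ∃ (N : ℕ) (f : Fin N → X →L[ℝ] ℝ) (c θ : Fin N → ℝ),
        ∀ x : X, H x r = ∑ i, c i * σ (f i x - θ i)) ∧
      ∀ x ∈ K, ‖g x - H x‖ < ε := by
  have hcomponent (r : Fin m) := hσ.continuousOn_mem_uniformClosureOn_neuralNetworks hK
    ((continuous_apply r).comp_continuousOn hg) ε hε
  choose φ hφ hφK using hcomponent
  refine ⟨fun x r => φ r x, fun r => exists_sum_of_mem_neuralNetworks (hφ r),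
    fun x hx => (pi_norm_lt_iff hε).2 fun r => ?_⟩
  simpa [Real.norm_eq_abs] using hφK r x hx

/-- Vector-valued universal approximation: each component of `H` is a single-hidden-layer
topological neural network, and `H` approximates `g` uniformly on `K` in the max norm
on `ℝ^m` (the sup norm on `Fin m → ℝ`). -/
theorem topological_network_dense_vector
    {X : Type*} [AddCommGroup X] [Module ℝ X] [TopologicalSpace X]
    [IsTopologicalAddGroup X] [ContinuousSMul ℝ X] [LocallyConvexSpace ℝ X] [T2Space X]
    (σ : ℝ → ℝ) (hσcont : Continuous σ) (hσ : TauberWiener σ)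
    (K : Set X) (hK : IsCompact K) (m : ℕ) (hm : 1 ≤ m)
    (g : X → Fin m → ℝ) (hg : ContinuousOn g K) (ε : ℝ) (hε : 0 < ε) :
    ∃ H : X → Fin m → ℝ,
      (∀ r : Fin m, ∃ (N : ℕ) (f : Fin N → X →L[ℝ] ℝ) (c θ : Fin N → ℝ),
        ∀ x : X, H x r = ∑ i, c i * σ (f i x - θ i)) ∧
      ∀ x ∈ K, ‖g x - H x‖ < ε :=
  topological_network_dense_vector_general σ hσ K hK m g hg ε hε
end

section
/- Let K ⊂ ℝ^d be compact and W ⊆ C(K, ℝ^m) compact in the sup norm, and assume σ is a continuous Tauber–Wiener function (so ridge networks y ↦ Σ α σ(ω·y + ζ) are dense in C(K', ℝ) for compact K' ⊂ ℝ^d). Then for every δ > 0 there exist N ≥ 1, ridge functions φ_k(y) = σ(ω_k·y + ζ_k) (k = 1,…,N), and continuous maps c_k : W → ℝ^m such that for all h ∈ W, sup_{y∈K} ‖h(y) − Σ_k c_k(h) φ_k(y)‖ ≤ 2δ. -/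
/-!
Ridge sums `∑ α • σ (ω ⬝ᵥ y + ζ)` are dense in `C(K, ℝ)`: the Tauber–Wiener property, applied to
`exp` on an interval containing the values of `a ⬝ᵥ y`, puts every `y ↦ exp (a ⬝ᵥ y)` in their
closure, and these functions span a point-separating subalgebra, dense by Stone–Weierstrass.
Coordinatewise, vector-valued ridge sums are dense as well. For the compact family `W`, take
ridge approximants of finitely many points whose balls cover `W` and glue them with a subordinate
partition of unity: the coefficients of the glued sum are continuous functions of `h ∈ W`.
-/

open Matrix

open Set Submodule
open scoped Pointwise

lemma ContinuousMap.continuous_smul_const {X V : Type*} [TopologicalSpace X] [TopologicalSpace V]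
    [AddCommMonoid V] [Module ℝ V] [ContinuousSMul ℝ V] (v : V) :
    Continuous fun f : C(X, ℝ) => f • ContinuousMap.const X v :=
  ContinuousMap.continuous_postcomp ⟨fun t : ℝ => t • v, by fun_prop⟩

theorem Dense.exists_mem_span_smul_dist_lt {X E : Type*} [TopologicalSpace X] [CompactSpace X]
    [T2Space X] [SeminormedAddCommGroup E] [NormedSpace ℝ E] {S : Set E} (hS : Dense S)
    (u : C(X, E)) {ε : ℝ} (hε : 0 < ε) :
    ∃ F ∈ span ℝ {F : X → E | ∃ ψ : C(X, ℝ), ∃ R ∈ S, F = fun x => ψ x • R},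
      ∀ x, dist (u x) (F x) < ε := by
  choose R hRS hR using fun x => hS.exists_dist_lt (u x) hε
  set U : X → Set X := fun x₀ => u ⁻¹' Metric.ball (R x₀) ε
  have hUo : ∀ x₀, IsOpen (U x₀) := fun _ => Metric.isOpen_ball.preimage u.continuous
  obtain ⟨t, ht⟩ := isCompact_univ.elim_finite_subcover U hUo fun x _ => mem_iUnion.2 ⟨x, hR x⟩
  obtain ⟨ρ, hρ⟩ := PartitionOfUnity.exists_isSubordinate isClosed_univ (fun i : t => U i)
    (fun i => hUo i) (by simpa [iUnion_subtype] using ht)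
  refine ⟨∑ i : t, fun x => ρ i x • R i, sum_mem fun i _ => subset_span ⟨ρ i, R i, hRS i, rfl⟩,
    fun x => ?_⟩
  have hmem := ρ.finsum_smul_mem_convex (mem_univ x) (g := fun i _ => R i)
    (fun i hi => Metric.mem_ball_comm.1 (hρ i (subset_tsupport _ hi))) (convex_ball (u x) ε)
  rw [finsum_eq_sum_of_fintype] at hmem
  simpa [Finset.sum_apply, dist_comm] using hmem

noncomputable section

variable {ι : Type*} [Fintype ι] {K : Set (ι → ℝ)} {κ X : Type*} [TopologicalSpace X]

def ridge (σ : C(ℝ, ℝ)) (ω : ι → ℝ) (ζ : ℝ) : C(K, ℝ) :=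
  σ.comp ⟨fun y => ω ⬝ᵥ (y : ι → ℝ) + ζ, by fun_prop⟩

@[simp]
lemma ridge_apply (σ : C(ℝ, ℝ)) (ω : ι → ℝ) (ζ : ℝ) (y : K) :
    ridge σ ω ζ y = σ (ω ⬝ᵥ (y : ι → ℝ) + ζ) :=
  rfl

variable (K) in
def ridgeSpan (σ : C(ℝ, ℝ)) : Submodule ℝ C(K, ℝ) :=
  span ℝ {f | ∃ ω ζ, f = ridge σ ω ζ}

def expDot (a : ι → ℝ) : C(K, ℝ) :=
  ⟨fun y => Real.exp (a ⬝ᵥ (y : ι → ℝ)), by fun_prop⟩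

lemma expDot_zero : expDot (K := K) 0 = 1 := by
  ext y
  simp [expDot]

lemma expDot_add (a b : ι → ℝ) : expDot (K := K) (a + b) = expDot a * expDot b := by
  ext y
  simp [expDot, add_dotProduct, Real.exp_add]

variable (K) in
def expDotSubalgebra : Subalgebra ℝ C(K, ℝ) :=
  (span ℝ (range (expDot (K := K)))).toSubalgebra (subset_span ⟨(0 : ι → ℝ), expDot_zero⟩)
    fun f g hf hg => by
      have hmul : range (expDot (K := K)) * range (expDot (K := K)) ⊆ range expDot := by
        rintro _ ⟨_, ⟨a, rfl⟩, _, ⟨b, rfl⟩, rfl⟩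
        exact ⟨a + b, expDot_add a b⟩
      have hfg := Submodule.mul_mem_mul hf hg
      rw [span_mul_span] at hfg
      exact span_mono hmul hfg

lemma expDotSubalgebra_separatesPoints : (expDotSubalgebra K).SeparatesPoints := by
  classical
  intro x y hxy
  obtain ⟨i, hi⟩ : ∃ i, (x : ι → ℝ) i ≠ (y : ι → ℝ) i := by
    by_contra! h
    exact hxy (Subtype.ext (funext h))
  refine ⟨_, ⟨expDot (Pi.single i 1), subset_span ⟨_, rfl⟩, rfl⟩, ?_⟩
  simpa [expDot] using hi

lemma expDot_mem_closure_ridgeSpan [CompactSpace K] {σ : C(ℝ, ℝ)} (hσ : TauberWiener σ)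
    (a : ι → ℝ) : expDot a ∈ (ridgeSpan K σ).topologicalClosure := by
  obtain ⟨B, hB⟩ : ∃ B, ∀ y : K, |a ⬝ᵥ (y : ι → ℝ)| ≤ B := by
    simpa using isCompact_univ.exists_bound_of_continuousOn
      (f := fun y : K => a ⬝ᵥ (y : ι → ℝ)) (by fun_prop)
  refine Metric.mem_closure_iff.2 fun ε hε => ?_
  obtain ⟨N, c, w, θ, hN⟩ :=
    hσ (-B) B Real.exp Real.continuous_exp.continuousOn (ε / 2) (half_pos hε)
  refine ⟨∑ i, c i • ridge σ (w i • a) (-θ i),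
    sum_mem fun i _ => smul_mem _ _ (subset_span ⟨_, _, rfl⟩), ?_⟩
  refine ((ContinuousMap.dist_le (half_pos hε).le).2 fun y => ?_).trans_lt (half_lt_self hε)
  simpa [expDot, Real.dist_eq, smul_dotProduct, ← sub_eq_add_neg, mul_comm]
    using (hN _ (abs_le.1 (hB y))).le

theorem dense_ridgeSpan [CompactSpace K] {σ : C(ℝ, ℝ)} (hσ : TauberWiener σ) :
    Dense (ridgeSpan K σ : Set C(K, ℝ)) := by
  have hexp : (expDotSubalgebra K).toSubmodule ≤ (ridgeSpan K σ).topologicalClosure :=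
    span_le.2 (range_subset_iff.2 fun a : ι → ℝ => expDot_mem_closure_ridgeSpan hσ a)
  have hSW := ContinuousMap.subalgebra_topologicalClosure_eq_top_of_separatesPoints _
    (expDotSubalgebra_separatesPoints (K := K))
  rw [dense_iff_closure_eq, ← topologicalClosure_coe, eq_univ_iff_forall]
  intro f
  have hf : f ∈ (expDotSubalgebra K).topologicalClosure := hSW ▸ Algebra.mem_top
  exact topologicalClosure_minimal _ hexp (isClosed_topologicalClosure _) hf

variable (K κ) in
def ridgeVecSpan (σ : C(ℝ, ℝ)) : Submodule ℝ C(K, κ → ℝ) :=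
  span ℝ {F | ∃ (ω : ι → ℝ) (ζ : ℝ) (v : κ → ℝ),
    F = ridge (K := K) σ ω ζ • ContinuousMap.const K v}

lemma smul_const_mem_ridgeVecSpan {σ : C(ℝ, ℝ)} {f : C(K, ℝ)} (hf : f ∈ ridgeSpan K σ)
    (v : κ → ℝ) : f • ContinuousMap.const K v ∈ ridgeVecSpan K κ σ := by
  induction hf using span_induction with
  | mem f hf =>
    obtain ⟨ω, ζ, rfl⟩ := hf
    exact subset_span ⟨ω, ζ, v, rfl⟩
  | zero => simp
  | add f g _ _ hf hg => simpa [add_smul] using add_mem hf hg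
  | smul a f _ hf =>
    convert smul_mem _ a hf using 1
    ext
    simp [mul_assoc]

theorem dense_ridgeVecSpan [Fintype κ] [CompactSpace K] {σ : C(ℝ, ℝ)} (hσ : TauberWiener σ) :
    Dense (ridgeVecSpan K κ σ : Set C(K, κ → ℝ)) := by
  classical
  have hclosure : ∀ (f : C(K, ℝ)) (v : κ → ℝ),
      f • ContinuousMap.const K v ∈ closure (ridgeVecSpan K κ σ : Set C(K, κ → ℝ)) :=
    fun f v => map_mem_closure (f := (· • ContinuousMap.const K v))
      (ContinuousMap.continuous_smul_const v)
      ((dense_ridgeSpan (K := K) hσ).closure_eq ▸ mem_univ f)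
      fun _ hr => smul_const_mem_ridgeVecSpan hr v
  rw [dense_iff_closure_eq, ← topologicalClosure_coe, eq_univ_iff_forall]
  intro g
  have hg : g = ∑ i, (⟨fun y => g y i, by fun_prop⟩ : C(K, ℝ)) •
      ContinuousMap.const K (Pi.single i 1) := by
    ext y j
    simp [Finset.sum_apply, Pi.single_apply]
  rw [hg]
  exact sum_mem fun i _ => hclosure _ _

variable (K κ X) in
def ridgeFamilySpan (σ : C(ℝ, ℝ)) : Submodule ℝ (X → C(K, κ → ℝ)) :=
  span ℝ {F | ∃ (ω : ι → ℝ) (ζ : ℝ) (c : C(X, κ → ℝ)),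
    F = fun x => ridge (K := K) σ ω ζ • ContinuousMap.const K (c x)}

lemma smul_mem_ridgeFamilySpan {σ : C(ℝ, ℝ)} (ψ : C(X, ℝ)) {R : C(K, κ → ℝ)}
    (hR : R ∈ ridgeVecSpan K κ σ) : (fun x => ψ x • R) ∈ ridgeFamilySpan K κ X σ := by
  induction hR using span_induction with
  | mem R hR =>
    obtain ⟨ω, ζ, v, rfl⟩ := hR
    refine subset_span ⟨ω, ζ, ψ • ContinuousMap.const X v, ?_⟩
    ext x y
    simp [mul_left_comm]
  | zero =>
    simp only [smul_zero]
    exact zero_mem _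
  | add R R' _ _ hR hR' =>
    simp only [smul_add]
    exact add_mem hR hR'
  | smul a R _ hR =>
    convert smul_mem _ a hR using 1
    ext x
    simp [smul_comm (ψ x) a]

lemma exists_sum_ridge_of_mem_ridgeFamilySpan {σ : C(ℝ, ℝ)} {F : X → C(K, κ → ℝ)}
    (hF : F ∈ ridgeFamilySpan K κ X σ) :
    ∃ N, 1 ≤ N ∧ ∃ (ω : Fin N → ι → ℝ) (ζ : Fin N → ℝ) (c : Fin N → C(X, κ → ℝ)),
      ∀ x y, F x y = ∑ k, σ (ω k ⬝ᵥ (y : ι → ℝ) + ζ k) • c k x := by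
  obtain ⟨n, a, G, rfl⟩ := mem_span_set'.1 hF
  choose ω ζ c hG using fun k => (G k).2
  refine ⟨n + 1, le_add_self, Fin.cons 0 ω, Fin.cons 0 ζ, Fin.cons 0 (fun k => a k • c k),
    fun x y => ?_⟩
  simp [Fin.sum_univ_succ, hG, smul_comm (a _)]

end

theorem compact_family_ridge_approximation_general
    {d m : ℕ} (K : Set (Fin d → ℝ)) [CompactSpace K]
    (σ : ℝ → ℝ) (hσcont : Continuous σ) (hσ : TauberWiener σ)
    (W : Set C(K, Fin m → ℝ)) (hW : IsCompact W)
    (δ : ℝ) (hδ : 0 < δ) :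
    ∃ (N : ℕ), 1 ≤ N ∧
      ∃ (ω : Fin N → Fin d → ℝ) (ζ : Fin N → ℝ) (c : Fin N → C(W, Fin m → ℝ)),
        ∀ (h : W) (y : K),
          ‖(h : C(K, Fin m → ℝ)) y -
            ∑ k, σ (ω k ⬝ᵥ (y : Fin d → ℝ) + ζ k) • c k h‖ ≤ 2 * δ := by
  have : CompactSpace W := isCompact_iff_compactSpace.mp hW
  obtain ⟨F, hF, hFW⟩ := (dense_ridgeVecSpan (σ := ⟨σ, hσcont⟩) hσ).exists_mem_span_smul_dist_lt
    ⟨((↑) : W → C(K, Fin m → ℝ)), continuous_subtype_val⟩ (by positivity : 0 < 2 * δ)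
  have hF' : F ∈ ridgeFamilySpan K (Fin m) W ⟨σ, hσcont⟩ := by
    refine span_le.2 ?_ hF
    rintro _ ⟨ψ, R, hR, rfl⟩
    exact smul_mem_ridgeFamilySpan ψ hR
  obtain ⟨N, hN, ω, ζ, c, hc⟩ := exists_sum_ridge_of_mem_ridgeFamilySpan hF'
  refine ⟨N, hN, ω, ζ, c, fun h y => ?_⟩
  have hdist := (ContinuousMap.dist_apply_le_dist y).trans_lt (hFW h)
  rw [dist_eq_norm, hc] at hdist
  exact hdist.le

/-- Uniform approximation of a compact family `W ⊆ C(K, ℝ^m)` by separable ridge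
expansions with continuous coefficient maps. -/
theorem compact_family_ridge_approximation
    {d m : ℕ} (K : Set (Fin d → ℝ)) [CompactSpace K] (hK : IsCompact K)
    (σ : ℝ → ℝ) (hσcont : Continuous σ) (hσ : TauberWiener σ)
    (W : Set C(K, Fin m → ℝ)) (hW : IsCompact W)
    (δ : ℝ) (hδ : 0 < δ) :
    ∃ (N : ℕ), 1 ≤ N ∧
      ∃ (ω : Fin N → Fin d → ℝ) (ζ : Fin N → ℝ) (c : Fin N → C(W, Fin m → ℝ)),
        ∀ (h : W) (y : K),
          ‖(h : C(K, Fin m → ℝ)) y -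
            ∑ k, σ (ω k ⬝ᵥ (y : Fin d → ℝ) + ζ k) • c k h‖ ≤ 2 * δ :=
  compact_family_ridge_approximation_general K σ hσcont hσ W hW δ hδ
end
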